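/- Fix D ≥ 2, a sign σ ∈ {1,−1}, and real numbers Λ, χ_B, χ. Consider the real vector space with basis {J_{ab} = −J_{ba}}, {B_a}, {P_a}, {H}, {J*_{ab} = −J*_{ba}}, {P*_a} (indices in {1,…,D}) and nonzero brackets: [J_{ab},J_{cd}] = δ_{bc}J_{ad} + δ_{ad}J_{bc} − δ_{bd}J_{ac} − δ_{ac}J_{bd}, the same pattern for [J_{ab},J*_{cd}] with J* in place of J on the right, [J_{ab},X_c] = δ_{cb}X_a − δ_{ca}X_b for X ∈ {B, P, P*}, [B_a,P_b] = δ_{ab}H, [P_a,H] = −σΛ²B_a, [P_a,P_b] = σΛ²J_{ab}, [P_a,P*_b] = −J*_{ab}, [P_a,J*_{bc}] = −σΛ²(δ_{ab}P*_c − δ_{ac}P*_b), [B_a,B_b] = −χ_B J*_{ab}, [B_a,H] = σΛ²χ_B P*_a (the extended (A)dS-Carroll algebra in D+1 dimensions). Then this bracket satisfies the Jacobi identity; the symmetric bilinear form determined by B(B_a,B_b) = χ_Bδ_{ab}, B(H,H) = −σΛ²χ_B, B(J_{ab},J*_{cd}) = δ_{ac}δ_{bd} − δ_{ad}δ_{bc},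 B(P_a,P*_b) = δ_{ab}, B(J_{ab},J_{cd}) = χ(δ_{ac}δ_{bd} − δ_{ad}δ_{bc}), B(P_a,P_b) = −σχΛ²δ_{ab}, with all other basis pairings zero, is invariant; and this form is nondegenerate if and only if Λ²χ_B ≠ 0. -/

import Mathlib

/-!
All three claims are checked on the basis `adsCarExtFam`. The Jacobiator and the invariance
defect `Bil [z, x] y + Bil x [z, y]` are trilinear, so it suffices that they vanish on triples
of basis vectors, where they reduce to identities between Kronecker deltas. The form pairs
`J` with `J*`, `P` with `P*`, and `B`, `H` with themselves, with weights `χB` and `-σΛ²χB`.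
If `Λ²χB ≠ 0` this yields an explicit `Bil`-dual family, so every coordinate of a vector in
the radical vanishes; if `Λ²χB = 0`, the generator `H` lies in the radical.
-/

/-- The Kronecker delta. -/
def kron {D : ℕ} (a b : Fin D) : ℝ := if a = b then 1 else 0

/-- The basis family of the extended (A)dS-Carroll algebra in `D+1` dimensions: the rotations
`J_{ab}` (`a < b`), boosts `B_a`, spatial translations `P_a`, time translation `H`, and the
extension generators `J*_{ab}` (`a < b`) and `P*_a`. -/
def adsCarExtFam {D : ℕ} {V : Type*} (J : Fin D → Fin D → V) (B P : Fin D → V) (H : V)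
    (Js : Fin D → Fin D → V) (Ps : Fin D → V) :
    ({p : Fin D × Fin D // p.1 < p.2} ⊕ (Fin D ⊕ (Fin D ⊕ (Unit ⊕
      ({p : Fin D × Fin D // p.1 < p.2} ⊕ Fin D))))) → V
  | Sum.inl p => J p.1.1 p.1.2
  | Sum.inr (Sum.inl a) => B a
  | Sum.inr (Sum.inr (Sum.inl a)) => P a
  | Sum.inr (Sum.inr (Sum.inr (Sum.inl _))) => H
  | Sum.inr (Sum.inr (Sum.inr (Sum.inr (Sum.inl p)))) => Js p.1.1 p.1.2
  | Sum.inr (Sum.inr (Sum.inr (Sum.inr (Sum.inr a)))) => Ps a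


section Multilinear

variable {R M N : Type*} [CommRing R] [AddCommGroup M] [Module R M] [AddCommGroup N]
  [Module R N]

def jacobiator (br : M →ₗ[R] M →ₗ[R] M) : M →ₗ[R] M →ₗ[R] M →ₗ[R] M :=
  LinearMap.mk₂ R (fun x y => br x ∘ₗ br y + br y ∘ₗ br.flip x + br.flip (br x y))
    (fun _ _ _ => by ext; simp; abel)
    (fun _ _ _ => by ext; simp)
    (fun _ _ _ => by ext; simp; abel)
    (fun _ _ _ => by ext; simp)

@[simp]
theorem jacobiator_apply (br : M →ₗ[R] M →ₗ[R] M) (x y z : M) :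
    jacobiator br x y z = br x (br y z) + br y (br z x) + br z (br x y) := rfl

def invarianceDefect (br : M →ₗ[R] M →ₗ[R] M) (Bil : M →ₗ[R] M →ₗ[R] R) :
    M →ₗ[R] M →ₗ[R] M →ₗ[R] R :=
  LinearMap.mk₂ R (fun z x => Bil (br z x) + Bil x ∘ₗ br z)
    (fun _ _ _ => by ext; simp; abel)
    (fun _ _ _ => by ext; simp)
    (fun _ _ _ => by ext; simp; abel)
    (fun _ _ _ => by ext; simp)

@[simp]
theorem invarianceDefect_apply (br : M →ₗ[R] M →ₗ[R] M) (Bil : M →ₗ[R] M →ₗ[R] R)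
    (z x y : M) : invarianceDefect br Bil z x y = Bil (br z x) y + Bil x (br z y) := rfl

theorem LinearMap.eq_zero_of_span_range₃ {ι : Type*} {v : ι → M}
    (hv : Submodule.span R (Set.range v) = ⊤) (f : M →ₗ[R] M →ₗ[R] M →ₗ[R] N)
    (h : ∀ i j k, f (v i) (v j) (v k) = 0) : f = 0 :=
  LinearMap.ext_on_range hv fun i => LinearMap.ext_on_range hv fun j =>
    LinearMap.ext_on_range hv fun k => h i j k

theorem Module.Basis.eq_zero_of_pairing_eq_zero {ι : Type*} [DecidableEq ι]
    (b : Module.Basis ι R M) (Bil : M →ₗ[R] M →ₗ[R] R) (w : ι → M)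
    (hw : ∀ i j, Bil (b j) (w i) = if j = i then 1 else 0) {x : M}
    (hx : ∀ i, Bil x (w i) = 0) : x = 0 := by
  have hcoord : ∀ i, b.coord i = Bil.flip (w i) := fun i =>
    b.ext fun j => by simp [hw, Finsupp.single_apply]
  refine b.ext_elem fun i => ?_
  simpa [← b.coord_apply, hcoord] using hx i

end Multilinear

theorem kron_comm {D : ℕ} (a b : Fin D) : kron a b = kron b a := by
  simp [kron, eq_comm]

theorem kron_mul_kron_sub_of_lt {D : ℕ} (p q : {p : Fin D × Fin D // p.1 < p.2}) :
    kron p.1.1 q.1.1 * kron p.1.2 q.1.2 - kron p.1.1 q.1.2 * kron p.1.2 q.1.1 =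
      if p = q then 1 else 0 := by
  obtain ⟨⟨a, b⟩, hab : a < b⟩ := p
  obtain ⟨⟨c, d⟩, hcd : c < d⟩ := q
  simp only [kron, Subtype.mk.injEq, Prod.mk.injEq]
  split_ifs <;> grind

-- `J - χJ*` and `P + σχΛ²P*` correct for the pairings `Bil J J` and `Bil P P`.
noncomputable def adsCarExtDualFam {D : ℕ} {V : Type*} [AddCommGroup V] [Module ℝ V]
    (σ Λ χB χ : ℝ) (J : Fin D → Fin D → V) (B P : Fin D → V) (H : V)
    (Js : Fin D → Fin D → V) (Ps : Fin D → V) :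
    ({p : Fin D × Fin D // p.1 < p.2} ⊕ (Fin D ⊕ (Fin D ⊕ (Unit ⊕
      ({p : Fin D × Fin D // p.1 < p.2} ⊕ Fin D))))) → V
  | Sum.inl p => Js p.1.1 p.1.2
  | Sum.inr (Sum.inl a) => χB⁻¹ • B a
  | Sum.inr (Sum.inr (Sum.inl a)) => Ps a
  | Sum.inr (Sum.inr (Sum.inr (Sum.inl _))) => (-(σ * Λ ^ 2 * χB))⁻¹ • H
  | Sum.inr (Sum.inr (Sum.inr (Sum.inr (Sum.inl p)))) => J p.1.1 p.1.2 - χ • Js p.1.1 p.1.2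
  | Sum.inr (Sum.inr (Sum.inr (Sum.inr (Sum.inr a)))) => P a + (σ * χ * Λ ^ 2) • Ps a

section AdSCarroll

variable {D : ℕ} {V : Type*} [AddCommGroup V] [Module ℝ V]

-- Field `xy` is the bracket of `x` with `y` (their pairing, in `IsExtAdSCarrollForm`);
-- `js` and `ps` stand for `J*` and `P*`.
structure IsExtAdSCarrollBracket (σ Λ χB : ℝ) (J Js : Fin D → Fin D → V)
    (B P Ps : Fin D → V) (H : V) (br : V →ₗ[ℝ] V →ₗ[ℝ] V) : Prop where
  anti : ∀ x y : V, br x y = - br y x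
  jj : ∀ a b c d, br (J a b) (J c d) =
    kron b c • J a d + kron a d • J b c - kron b d • J a c - kron a c • J b d
  jjs : ∀ a b c d, br (J a b) (Js c d) =
    kron b c • Js a d + kron a d • Js b c - kron b d • Js a c - kron a c • Js b d
  jb : ∀ a b c, br (J a b) (B c) = kron c b • B a - kron c a • B b
  jp : ∀ a b c, br (J a b) (P c) = kron c b • P a - kron c a • P b
  jps : ∀ a b c, br (J a b) (Ps c) = kron c b • Ps a - kron c a • Ps b
  bp : ∀ a b, br (B a) (P b) = kron a b • H
  ph : ∀ a, br (P a) H = (-(σ * Λ ^ 2)) • B a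
  pp : ∀ a b, br (P a) (P b) = (σ * Λ ^ 2) • J a b
  pps : ∀ a b, br (P a) (Ps b) = - Js a b
  pjs : ∀ a b c, br (P a) (Js b c) = (-(σ * Λ ^ 2)) • (kron a b • Ps c - kron a c • Ps b)
  bb : ∀ a b, br (B a) (B b) = (-χB) • Js a b
  bh : ∀ a, br (B a) H = (σ * Λ ^ 2 * χB) • Ps a
  jh : ∀ a b, br (J a b) H = 0
  bjs : ∀ a b c, br (B a) (Js b c) = 0
  hjs : ∀ a b, br H (Js a b) = 0
  jsjs : ∀ a b c d, br (Js a b) (Js c d) = 0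
  jsps : ∀ a b c, br (Js a b) (Ps c) = 0
  bps : ∀ a b, br (B a) (Ps b) = 0
  hps : ∀ a, br H (Ps a) = 0
  psps : ∀ a b, br (Ps a) (Ps b) = 0

structure IsExtAdSCarrollForm (σ Λ χB χ : ℝ) (J Js : Fin D → Fin D → V)
    (B P Ps : Fin D → V) (H : V) (Bil : V →ₗ[ℝ] V →ₗ[ℝ] ℝ) : Prop where
  symm : ∀ x y : V, Bil x y = Bil y x
  bb : ∀ a b, Bil (B a) (B b) = χB * kron a b
  hh : Bil H H = -(σ * Λ ^ 2 * χB)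
  jjs : ∀ a b c d, Bil (J a b) (Js c d) = kron a c * kron b d - kron a d * kron b c
  pps : ∀ a b, Bil (P a) (Ps b) = kron a b
  jj : ∀ a b c d, Bil (J a b) (J c d) = χ * (kron a c * kron b d - kron a d * kron b c)
  pp : ∀ a b, Bil (P a) (P b) = -(σ * χ * Λ ^ 2) * kron a b
  jb : ∀ a b c, Bil (J a b) (B c) = 0
  jp : ∀ a b c, Bil (J a b) (P c) = 0
  jh : ∀ a b, Bil (J a b) H = 0
  jps : ∀ a b c, Bil (J a b) (Ps c) = 0
  bp : ∀ a b, Bil (B a) (P b) = 0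
  bh : ∀ a, Bil (B a) H = 0
  bjs : ∀ a b c, Bil (B a) (Js b c) = 0
  bps : ∀ a b, Bil (B a) (Ps b) = 0
  ph : ∀ a, Bil (P a) H = 0
  pjs : ∀ a b c, Bil (P a) (Js b c) = 0
  hjs : ∀ a b, Bil H (Js a b) = 0
  hps : ∀ a, Bil H (Ps a) = 0
  jsjs : ∀ a b c d, Bil (Js a b) (Js c d) = 0
  jsps : ∀ a b c, Bil (Js a b) (Ps c) = 0
  psps : ∀ a b, Bil (Ps a) (Ps b) = 0

variable {σ Λ χB χ : ℝ} {J Js : Fin D → Fin D → V} {B P Ps : Fin D → V} {H : V}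

variable {br : V →ₗ[ℝ] V →ₗ[ℝ] V} {Bil : V →ₗ[ℝ] V →ₗ[ℝ] ℝ}

namespace IsExtAdSCarrollBracket

theorem hh (h : IsExtAdSCarrollBracket σ Λ χB J Js B P Ps H br) : br H H = 0 := by
  have h2 : (2 : ℝ) • br H H = 0 := by rw [two_smul]; nth_rewrite 1 [h.anti]; abel
  simpa using h2

theorem jsj (h : IsExtAdSCarrollBracket σ Λ χB J Js B P Ps H br) (c d a b : Fin D) :
    br (Js c d) (J a b) =
      -(kron b c • Js a d + kron a d • Js b c - kron b d • Js a c - kron a c • Js b d) := by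
  rw [h.anti, h.jjs]

theorem bj (h : IsExtAdSCarrollBracket σ Λ χB J Js B P Ps H br) (c a b : Fin D) :
    br (B c) (J a b) = -(kron c b • B a - kron c a • B b) := by
  rw [h.anti, h.jb]

theorem pj (h : IsExtAdSCarrollBracket σ Λ χB J Js B P Ps H br) (c a b : Fin D) :
    br (P c) (J a b) = -(kron c b • P a - kron c a • P b) := by
  rw [h.anti, h.jp]

theorem psj (h : IsExtAdSCarrollBracket σ Λ χB J Js B P Ps H br) (c a b : Fin D) :
    br (Ps c) (J a b) = -(kron c b • Ps a - kron c a • Ps b) := by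
  rw [h.anti, h.jps]

theorem pb (h : IsExtAdSCarrollBracket σ Λ χB J Js B P Ps H br) (b a : Fin D) :
    br (P b) (B a) = -(kron a b • H) := by
  rw [h.anti, h.bp]

theorem hp (h : IsExtAdSCarrollBracket σ Λ χB J Js B P Ps H br) (a : Fin D) :
    br H (P a) = (σ * Λ ^ 2) • B a := by
  rw [h.anti, h.ph, neg_smul, neg_neg]

theorem hb (h : IsExtAdSCarrollBracket σ Λ χB J Js B P Ps H br) (a : Fin D) :
    br H (B a) = -((σ * Λ ^ 2 * χB) • Ps a) := by
  rw [h.anti, h.bh]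

theorem hj (h : IsExtAdSCarrollBracket σ Λ χB J Js B P Ps H br) (a b : Fin D) :
    br H (J a b) = 0 := by
  rw [h.anti, h.jh, neg_zero]

theorem psp (h : IsExtAdSCarrollBracket σ Λ χB J Js B P Ps H br) (b a : Fin D) :
    br (Ps b) (P a) = Js a b := by
  rw [h.anti, h.pps, neg_neg]

theorem jsp (h : IsExtAdSCarrollBracket σ Λ χB J Js B P Ps H br) (b c a : Fin D) :
    br (Js b c) (P a) = (σ * Λ ^ 2) • (kron a b • Ps c - kron a c • Ps b) := by
  rw [h.anti, h.pjs, neg_smul, neg_neg]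

theorem jsb (h : IsExtAdSCarrollBracket σ Λ χB J Js B P Ps H br) (b c a : Fin D) :
    br (Js b c) (B a) = 0 := by
  rw [h.anti, h.bjs, neg_zero]

theorem jsh (h : IsExtAdSCarrollBracket σ Λ χB J Js B P Ps H br) (a b : Fin D) :
    br (Js a b) H = 0 := by
  rw [h.anti, h.hjs, neg_zero]

theorem psjs (h : IsExtAdSCarrollBracket σ Λ χB J Js B P Ps H br) (c a b : Fin D) :
    br (Ps c) (Js a b) = 0 := by
  rw [h.anti, h.jsps, neg_zero]

theorem psb (h : IsExtAdSCarrollBracket σ Λ χB J Js B P Ps H br) (b a : Fin D) :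
    br (Ps b) (B a) = 0 := by
  rw [h.anti, h.bps, neg_zero]

theorem psh (h : IsExtAdSCarrollBracket σ Λ χB J Js B P Ps H br) (a : Fin D) :
    br (Ps a) H = 0 := by
  rw [h.anti, h.hps, neg_zero]

set_option maxHeartbeats 4000000 in
theorem jacobiator_adsCarExtFam (h : IsExtAdSCarrollBracket σ Λ χB J Js B P Ps H br)
    (hJ : ∀ a b, J a b = -J b a) (hJs : ∀ a b, Js a b = -Js b a) (i j k) :
    jacobiator br (adsCarExtFam J B P H Js Ps i) (adsCarExtFam J B P H Js Ps j)
      (adsCarExtFam J B P H Js Ps k) = 0 := by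
  -- Writing `J = g - gᵀ` makes the identity on basis elements a formal one in `g`.
  obtain ⟨g, hg⟩ : ∃ g : Fin D → Fin D → V, ∀ a b, J a b = g a b - g b a :=
    ⟨fun a b => (2⁻¹ : ℝ) • J a b, fun a b => by dsimp only; rw [hJ b a]; module⟩
  obtain ⟨gs, hgs⟩ : ∃ gs : Fin D → Fin D → V, ∀ a b, Js a b = gs a b - gs b a :=
    ⟨fun a b => (2⁻¹ : ℝ) • Js a b, fun a b => by dsimp only; rw [hJs b a]; module⟩
  rcases i with (⟨⟨a₁, b₁⟩, -⟩ | a₁ | a₁ | - | ⟨⟨a₁, b₁⟩, -⟩ | a₁) <;>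
  rcases j with (⟨⟨a₂, b₂⟩, -⟩ | a₂ | a₂ | - | ⟨⟨a₂, b₂⟩, -⟩ | a₂) <;>
  rcases k with (⟨⟨a₃, b₃⟩, -⟩ | a₃ | a₃ | - | ⟨⟨a₃, b₃⟩, -⟩ | a₃) <;>
  simp only [adsCarExtFam, jacobiator_apply, h.jj, h.jjs, h.jb, h.jp, h.jps, h.bp, h.ph, h.pp,
    h.pps, h.pjs, h.bb, h.bh, h.jh, h.bjs, h.hjs, h.jsjs, h.jsps, h.bps, h.hps, h.psps, h.hh,
    h.jsj, h.bj, h.pj, h.psj, h.pb, h.hp, h.hb, h.hj, h.psp, h.jsp, h.jsb, h.jsh, h.psjs,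
    h.psb, h.psh, map_add, map_sub, map_smul, map_neg, map_zero, smul_add, smul_sub,
    smul_neg, smul_zero, smul_smul, neg_neg, neg_zero, add_zero, zero_add, sub_zero] <;>
  (try simp only [hg, hgs]) <;>
  (try (match_scalars <;> ((try simp only [kron_comm]); ring1)))

theorem jacobi (h : IsExtAdSCarrollBracket σ Λ χB J Js B P Ps H br)
    (hJ : ∀ a b, J a b = -J b a) (hJs : ∀ a b, Js a b = -Js b a)
    (hspan : Submodule.span ℝ (Set.range (adsCarExtFam J B P H Js Ps)) = ⊤) (x y z : V) :
    br x (br y z) + br y (br z x) + br z (br x y) = 0 := by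
  rw [← jacobiator_apply, LinearMap.eq_zero_of_span_range₃ hspan _
    (h.jacobiator_adsCarExtFam hJ hJs)]
  rfl

end IsExtAdSCarrollBracket

namespace IsExtAdSCarrollForm

theorem bj (h : IsExtAdSCarrollForm σ Λ χB χ J Js B P Ps H Bil) (c a b : Fin D) :
    Bil (B c) (J a b) = 0 := (h.symm _ _).trans (h.jb a b c)

theorem pj (h : IsExtAdSCarrollForm σ Λ χB χ J Js B P Ps H Bil) (c a b : Fin D) :
    Bil (P c) (J a b) = 0 := (h.symm _ _).trans (h.jp a b c)

theorem hj (h : IsExtAdSCarrollForm σ Λ χB χ J Js B P Ps H Bil) (a b : Fin D) :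
    Bil H (J a b) = 0 := (h.symm _ _).trans (h.jh a b)

theorem jsj (h : IsExtAdSCarrollForm σ Λ χB χ J Js B P Ps H Bil) (c d a b : Fin D) :
    Bil (Js c d) (J a b) = kron a c * kron b d - kron a d * kron b c :=
  (h.symm _ _).trans (h.jjs a b c d)

theorem psj (h : IsExtAdSCarrollForm σ Λ χB χ J Js B P Ps H Bil) (c a b : Fin D) :
    Bil (Ps c) (J a b) = 0 := (h.symm _ _).trans (h.jps a b c)

theorem pb (h : IsExtAdSCarrollForm σ Λ χB χ J Js B P Ps H Bil) (b a : Fin D) :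
    Bil (P b) (B a) = 0 := (h.symm _ _).trans (h.bp a b)

theorem hb (h : IsExtAdSCarrollForm σ Λ χB χ J Js B P Ps H Bil) (a : Fin D) :
    Bil H (B a) = 0 := (h.symm _ _).trans (h.bh a)

theorem jsb (h : IsExtAdSCarrollForm σ Λ χB χ J Js B P Ps H Bil) (b c a : Fin D) :
    Bil (Js b c) (B a) = 0 := (h.symm _ _).trans (h.bjs a b c)

theorem psb (h : IsExtAdSCarrollForm σ Λ χB χ J Js B P Ps H Bil) (b a : Fin D) :
    Bil (Ps b) (B a) = 0 := (h.symm _ _).trans (h.bps a b)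

theorem hp (h : IsExtAdSCarrollForm σ Λ χB χ J Js B P Ps H Bil) (a : Fin D) :
    Bil H (P a) = 0 := (h.symm _ _).trans (h.ph a)

theorem jsp (h : IsExtAdSCarrollForm σ Λ χB χ J Js B P Ps H Bil) (b c a : Fin D) :
    Bil (Js b c) (P a) = 0 := (h.symm _ _).trans (h.pjs a b c)

theorem psp (h : IsExtAdSCarrollForm σ Λ χB χ J Js B P Ps H Bil) (b a : Fin D) :
    Bil (Ps b) (P a) = kron a b := (h.symm _ _).trans (h.pps a b)

theorem jsh (h : IsExtAdSCarrollForm σ Λ χB χ J Js B P Ps H Bil) (a b : Fin D) :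
    Bil (Js a b) H = 0 := (h.symm _ _).trans (h.hjs a b)

theorem psh (h : IsExtAdSCarrollForm σ Λ χB χ J Js B P Ps H Bil) (a : Fin D) :
    Bil (Ps a) H = 0 := (h.symm _ _).trans (h.hps a)

theorem psjs (h : IsExtAdSCarrollForm σ Λ χB χ J Js B P Ps H Bil) (c a b : Fin D) :
    Bil (Ps c) (Js a b) = 0 := (h.symm _ _).trans (h.jsps a b c)

set_option maxHeartbeats 1000000 in
theorem invarianceDefect_adsCarExtFam (h : IsExtAdSCarrollForm σ Λ χB χ J Js B P Ps H Bil)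
    (hbr : IsExtAdSCarrollBracket σ Λ χB J Js B P Ps H br) (k i j) :
    invarianceDefect br Bil (adsCarExtFam J B P H Js Ps k) (adsCarExtFam J B P H Js Ps i)
      (adsCarExtFam J B P H Js Ps j) = 0 := by
  rcases k with (⟨⟨a₁, b₁⟩, -⟩ | a₁ | a₁ | - | ⟨⟨a₁, b₁⟩, -⟩ | a₁) <;>
  rcases i with (⟨⟨a₂, b₂⟩, -⟩ | a₂ | a₂ | - | ⟨⟨a₂, b₂⟩, -⟩ | a₂) <;>
  rcases j with (⟨⟨a₃, b₃⟩, -⟩ | a₃ | a₃ | - | ⟨⟨a₃, b₃⟩, -⟩ | a₃) <;>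
  simp only [adsCarExtFam, invarianceDefect_apply, hbr.jj, hbr.jjs, hbr.jb, hbr.jp, hbr.jps,
    hbr.bp, hbr.ph, hbr.pp, hbr.pps, hbr.pjs, hbr.bb, hbr.bh, hbr.jh, hbr.bjs, hbr.hjs,
    hbr.jsjs, hbr.jsps, hbr.bps, hbr.hps, hbr.psps, hbr.hh, hbr.jsj, hbr.bj, hbr.pj, hbr.psj,
    hbr.pb, hbr.hp, hbr.hb, hbr.hj, hbr.psp, hbr.jsp, hbr.jsb, hbr.jsh, hbr.psjs, hbr.psb,
    hbr.psh, h.bb, h.hh, h.jjs, h.pps, h.jj, h.pp, h.jb, h.jp, h.jh, h.jps, h.bp, h.bh, h.bjs,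
    h.bps, h.ph, h.pjs, h.hjs, h.hps, h.jsjs, h.jsps, h.psps, h.bj, h.pj, h.hj, h.jsj, h.psj,
    h.pb, h.hb, h.jsb, h.psb, h.hp, h.jsp, h.psp, h.jsh, h.psh, h.psjs, map_add, map_sub,
    map_smul, map_neg, map_zero, LinearMap.add_apply, LinearMap.sub_apply,
    LinearMap.smul_apply, LinearMap.neg_apply, LinearMap.zero_apply, smul_eq_mul] <;>
  (try simp only [kron_comm]) <;> ring

theorem invariant (h : IsExtAdSCarrollForm σ Λ χB χ J Js B P Ps H Bil)
    (hbr : IsExtAdSCarrollBracket σ Λ χB J Js B P Ps H br)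
    (hspan : Submodule.span ℝ (Set.range (adsCarExtFam J B P H Js Ps)) = ⊤) (x y z : V) :
    Bil (br z x) y + Bil x (br z y) = 0 := by
  rw [← invarianceDefect_apply, LinearMap.eq_zero_of_span_range₃ hspan _
    (h.invarianceDefect_adsCarExtFam hbr)]
  rfl

theorem apply_adsCarExtDualFam (h : IsExtAdSCarrollForm σ Λ χB χ J Js B P Ps H Bil)
    (hσ : σ ≠ 0) (hΛχB : Λ ^ 2 * χB ≠ 0) (i j) :
    Bil (adsCarExtFam J B P H Js Ps j) (adsCarExtDualFam σ Λ χB χ J B P H Js Ps i) =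
      if j = i then 1 else 0 := by
  have hχB : χB ≠ 0 := right_ne_zero_of_mul hΛχB
  have hH : -(σ * Λ ^ 2 * χB) ≠ 0 := by
    rw [neg_ne_zero, mul_assoc]; exact mul_ne_zero hσ hΛχB
  rcases i with (p | a | a | - | p | a) <;> rcases j with (q | b | b | - | q | b) <;>
  simp only [adsCarExtFam, adsCarExtDualFam, map_add, map_sub, map_smul, smul_eq_mul,
    h.bb, h.hh, h.jjs, h.pps, h.jj, h.pp, h.jb, h.jp, h.jh, h.jps, h.bp, h.bh, h.bjs,
    h.bps, h.ph, h.pjs, h.hjs, h.hps, h.jsjs, h.jsps, h.psps, h.bj, h.pj, h.hj, h.jsj, h.psj,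
    h.pb, h.hb, h.jsb, h.psb, h.hp, h.jsp, h.psp, h.jsh, h.psh, h.psjs, kron_mul_kron_sub_of_lt,
    Sum.inl.injEq, Sum.inr.injEq, reduceCtorEq, if_false, mul_zero, add_zero, sub_zero,
    sub_self, inv_mul_cancel₀ hH, if_true] <;>
  first
  | ring1
  | simp [kron, eq_comm, hχB]

theorem eq_zero_of_forall_apply_eq_zero (h : IsExtAdSCarrollForm σ Λ χB χ J Js B P Ps H Bil)
    (hσ : σ ≠ 0) (hΛχB : Λ ^ 2 * χB ≠ 0)
    (hindep : LinearIndependent ℝ (adsCarExtFam J B P H Js Ps))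
    (hspan : Submodule.span ℝ (Set.range (adsCarExtFam J B P H Js Ps)) = ⊤) {x : V}
    (hx : ∀ y, Bil x y = 0) : x = 0 :=
  (Module.Basis.mk hindep hspan.ge).eq_zero_of_pairing_eq_zero Bil
    (adsCarExtDualFam σ Λ χB χ J B P H Js Ps)
    (by simpa using h.apply_adsCarExtDualFam hσ hΛχB) fun _ => hx _

theorem apply_H_eq_zero (h : IsExtAdSCarrollForm σ Λ χB χ J Js B P Ps H Bil)
    (hspan : Submodule.span ℝ (Set.range (adsCarExtFam J B P H Js Ps)) = ⊤)
    (hΛχB : Λ ^ 2 * χB = 0) : Bil H = 0 :=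
  LinearMap.ext_on_range hspan fun i => by
    rcases i with (_ | _ | _ | _ | _ | _) <;>
    simp [adsCarExtFam, h.hj, h.hb, h.hp, h.hh, h.hjs, h.hps, mul_assoc, hΛχB]

theorem nondegenerate_iff (h : IsExtAdSCarrollForm σ Λ χB χ J Js B P Ps H Bil)
    (hσ : σ ≠ 0) (hindep : LinearIndependent ℝ (adsCarExtFam J B P H Js Ps))
    (hspan : Submodule.span ℝ (Set.range (adsCarExtFam J B P H Js Ps)) = ⊤) :
    (∀ x : V, (∀ y : V, Bil x y = 0) → x = 0) ↔ Λ ^ 2 * χB ≠ 0 := by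
  refine ⟨fun hnd hΛχB => ?_,
    fun hΛχB _ => h.eq_zero_of_forall_apply_eq_zero hσ hΛχB hindep hspan⟩
  have hH : H = 0 := hnd H fun y => by rw [h.apply_H_eq_zero hspan hΛχB, LinearMap.zero_apply]
  exact hindep.ne_zero (Sum.inr (Sum.inr (Sum.inr (Sum.inl ())))) hH

end IsExtAdSCarrollForm

end AdSCarroll

theorem extended_ads_carroll_algebra_general
    (D : ℕ) (σ : ℝ) (hσ : σ = 1 ∨ σ = -1) (Λ χB χ : ℝ)
    (V : Type*) [AddCommGroup V] [Module ℝ V]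
    (J Js : Fin D → Fin D → V) (B P Ps : Fin D → V) (H : V)
    (hJanti : ∀ a b, J a b = - J b a)
    (hJsanti : ∀ a b, Js a b = - Js b a)
    (hindep : LinearIndependent ℝ (adsCarExtFam J B P H Js Ps))
    (hspan : Submodule.span ℝ (Set.range (adsCarExtFam J B P H Js Ps)) = ⊤)
    (br : V →ₗ[ℝ] V →ₗ[ℝ] V)
    (hbr_anti : ∀ x y : V, br x y = - br y x)
    (hJJ : ∀ a b c d, br (J a b) (J c d) =
      kron b c • J a d + kron a d • J b c - kron b d • J a c - kron a c • J b d)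
    (hJJs : ∀ a b c d, br (J a b) (Js c d) =
      kron b c • Js a d + kron a d • Js b c - kron b d • Js a c - kron a c • Js b d)
    (hJB : ∀ a b c, br (J a b) (B c) = kron c b • B a - kron c a • B b)
    (hJP : ∀ a b c, br (J a b) (P c) = kron c b • P a - kron c a • P b)
    (hJPs : ∀ a b c, br (J a b) (Ps c) = kron c b • Ps a - kron c a • Ps b)
    (hBP : ∀ a b, br (B a) (P b) = kron a b • H)
    (hPH : ∀ a, br (P a) H = (-(σ * Λ ^ 2)) • B a)
    (hPP : ∀ a b, br (P a) (P b) = (σ * Λ ^ 2) • J a b)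
    (hPPs : ∀ a b, br (P a) (Ps b) = - Js a b)
    (hPJs : ∀ a b c, br (P a) (Js b c) =
      (-(σ * Λ ^ 2)) • (kron a b • Ps c - kron a c • Ps b))
    (hBB : ∀ a b, br (B a) (B b) = (-χB) • Js a b)
    (hBH : ∀ a, br (B a) H = (σ * Λ ^ 2 * χB) • Ps a)
    (hJH : ∀ a b, br (J a b) H = 0)
    (hBJs : ∀ a b c, br (B a) (Js b c) = 0)
    (hHJs : ∀ a b, br H (Js a b) = 0)
    (hJsJs : ∀ a b c d, br (Js a b) (Js c d) = 0)
    (hJsPs : ∀ a b c, br (Js a b) (Ps c) = 0)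
    (hBPs : ∀ a b, br (B a) (Ps b) = 0)
    (hHPs : ∀ a, br H (Ps a) = 0)
    (hPsPs : ∀ a b, br (Ps a) (Ps b) = 0)
    (Bil : V →ₗ[ℝ] V →ₗ[ℝ] ℝ)
    (hsymm : ∀ x y : V, Bil x y = Bil y x)
    (hBBF : ∀ a b, Bil (B a) (B b) = χB * kron a b)
    (hHHF : Bil H H = -(σ * Λ ^ 2 * χB))
    (hJJsF : ∀ a b c d, Bil (J a b) (Js c d) = kron a c * kron b d - kron a d * kron b c)
    (hPPsF : ∀ a b, Bil (P a) (Ps b) = kron a b)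
    (hJJF : ∀ a b c d, Bil (J a b) (J c d) = χ * (kron a c * kron b d - kron a d * kron b c))
    (hPPF : ∀ a b, Bil (P a) (P b) = -(σ * χ * Λ ^ 2) * kron a b)
    (hJBF : ∀ a b c, Bil (J a b) (B c) = 0)
    (hJPF : ∀ a b c, Bil (J a b) (P c) = 0)
    (hJHF : ∀ a b, Bil (J a b) H = 0)
    (hJPsF : ∀ a b c, Bil (J a b) (Ps c) = 0)
    (hBPF : ∀ a b, Bil (B a) (P b) = 0)
    (hBHF : ∀ a, Bil (B a) H = 0)
    (hBJsF : ∀ a b c, Bil (B a) (Js b c) = 0)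
    (hBPsF : ∀ a b, Bil (B a) (Ps b) = 0)
    (hPHF : ∀ a, Bil (P a) H = 0)
    (hPJsF : ∀ a b c, Bil (P a) (Js b c) = 0)
    (hHJsF : ∀ a b, Bil H (Js a b) = 0)
    (hHPsF : ∀ a, Bil H (Ps a) = 0)
    (hJsJsF : ∀ a b c d, Bil (Js a b) (Js c d) = 0)
    (hJsPsF : ∀ a b c, Bil (Js a b) (Ps c) = 0)
    (hPsPsF : ∀ a b, Bil (Ps a) (Ps b) = 0) :
    (∀ x y z : V, br x (br y z) + br y (br z x) + br z (br x y) = 0) ∧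
    (∀ x y z : V, Bil (br z x) y + Bil x (br z y) = 0) ∧
    ((∀ x : V, (∀ y : V, Bil x y = 0) → x = 0) ↔ Λ ^ 2 * χB ≠ 0) := by
  have hbr : IsExtAdSCarrollBracket σ Λ χB J Js B P Ps H br :=
    ⟨hbr_anti, hJJ, hJJs, hJB, hJP, hJPs, hBP, hPH, hPP, hPPs, hPJs, hBB, hBH, hJH, hBJs, hHJs,
      hJsJs, hJsPs, hBPs, hHPs, hPsPs⟩
  have hBil : IsExtAdSCarrollForm σ Λ χB χ J Js B P Ps H Bil :=
    ⟨hsymm, hBBF, hHHF, hJJsF, hPPsF, hJJF, hPPF, hJBF, hJPF, hJHF, hJPsF, hBPF, hBHF, hBJsF,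
      hBPsF, hPHF, hPJsF, hHJsF, hHPsF, hJsJsF, hJsPsF, hPsPsF⟩
  have hσ0 : σ ≠ 0 := by rcases hσ with rfl | rfl <;> norm_num
  exact ⟨hbr.jacobi hJanti hJsanti hspan, fun x y z => hBil.invariant hbr hspan x y z,
    hBil.nondegenerate_iff hσ0 hindep hspan⟩

/-- The extended (A)dS-Carroll algebra in `D+1` dimensions: its bracket
satisfies the Jacobi identity, the indicated symmetric bilinear form is invariant, and it is
nondegenerate iff `Λ²χ_B ≠ 0`. -/
theorem extended_ads_carroll_algebra
    (D : ℕ) (hD : 2 ≤ D) (σ : ℝ) (hσ : σ = 1 ∨ σ = -1) (Λ χB χ : ℝ)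
    (V : Type*) [AddCommGroup V] [Module ℝ V]
    (J Js : Fin D → Fin D → V) (B P Ps : Fin D → V) (H : V)
    (hJanti : ∀ a b, J a b = - J b a)
    (hJsanti : ∀ a b, Js a b = - Js b a)
    (hindep : LinearIndependent ℝ (adsCarExtFam J B P H Js Ps))
    (hspan : Submodule.span ℝ (Set.range (adsCarExtFam J B P H Js Ps)) = ⊤)
    (br : V →ₗ[ℝ] V →ₗ[ℝ] V)
    (hbr_anti : ∀ x y : V, br x y = - br y x)
    (hJJ : ∀ a b c d, br (J a b) (J c d) =
      kron b c • J a d + kron a d • J b c - kron b d • J a c - kron a c • J b d)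
    (hJJs : ∀ a b c d, br (J a b) (Js c d) =
      kron b c • Js a d + kron a d • Js b c - kron b d • Js a c - kron a c • Js b d)
    (hJB : ∀ a b c, br (J a b) (B c) = kron c b • B a - kron c a • B b)
    (hJP : ∀ a b c, br (J a b) (P c) = kron c b • P a - kron c a • P b)
    (hJPs : ∀ a b c, br (J a b) (Ps c) = kron c b • Ps a - kron c a • Ps b)
    (hBP : ∀ a b, br (B a) (P b) = kron a b • H)
    (hPH : ∀ a, br (P a) H = (-(σ * Λ ^ 2)) • B a)
    (hPP : ∀ a b, br (P a) (P b) = (σ * Λ ^ 2) • J a b)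
    (hPPs : ∀ a b, br (P a) (Ps b) = - Js a b)
    (hPJs : ∀ a b c, br (P a) (Js b c) =
      (-(σ * Λ ^ 2)) • (kron a b • Ps c - kron a c • Ps b))
    (hBB : ∀ a b, br (B a) (B b) = (-χB) • Js a b)
    (hBH : ∀ a, br (B a) H = (σ * Λ ^ 2 * χB) • Ps a)
    (hJH : ∀ a b, br (J a b) H = 0)
    (hBJs : ∀ a b c, br (B a) (Js b c) = 0)
    (hHJs : ∀ a b, br H (Js a b) = 0)
    (hJsJs : ∀ a b c d, br (Js a b) (Js c d) = 0)
    (hJsPs : ∀ a b c, br (Js a b) (Ps c) = 0)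
    (hBPs : ∀ a b, br (B a) (Ps b) = 0)
    (hHPs : ∀ a, br H (Ps a) = 0)
    (hPsPs : ∀ a b, br (Ps a) (Ps b) = 0)
    (Bil : V →ₗ[ℝ] V →ₗ[ℝ] ℝ)
    (hsymm : ∀ x y : V, Bil x y = Bil y x)
    (hBBF : ∀ a b, Bil (B a) (B b) = χB * kron a b)
    (hHHF : Bil H H = -(σ * Λ ^ 2 * χB))
    (hJJsF : ∀ a b c d, Bil (J a b) (Js c d) = kron a c * kron b d - kron a d * kron b c)
    (hPPsF : ∀ a b, Bil (P a) (Ps b) = kron a b)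
    (hJJF : ∀ a b c d, Bil (J a b) (J c d) = χ * (kron a c * kron b d - kron a d * kron b c))
    (hPPF : ∀ a b, Bil (P a) (P b) = -(σ * χ * Λ ^ 2) * kron a b)
    (hJBF : ∀ a b c, Bil (J a b) (B c) = 0)
    (hJPF : ∀ a b c, Bil (J a b) (P c) = 0)
    (hJHF : ∀ a b, Bil (J a b) H = 0)
    (hJPsF : ∀ a b c, Bil (J a b) (Ps c) = 0)
    (hBPF : ∀ a b, Bil (B a) (P b) = 0)
    (hBHF : ∀ a, Bil (B a) H = 0)
    (hBJsF : ∀ a b c, Bil (B a) (Js b c) = 0)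
    (hBPsF : ∀ a b, Bil (B a) (Ps b) = 0)
    (hPHF : ∀ a, Bil (P a) H = 0)
    (hPJsF : ∀ a b c, Bil (P a) (Js b c) = 0)
    (hHJsF : ∀ a b, Bil H (Js a b) = 0)
    (hHPsF : ∀ a, Bil H (Ps a) = 0)
    (hJsJsF : ∀ a b c d, Bil (Js a b) (Js c d) = 0)
    (hJsPsF : ∀ a b c, Bil (Js a b) (Ps c) = 0)
    (hPsPsF : ∀ a b, Bil (Ps a) (Ps b) = 0) :
    (∀ x y z : V, br x (br y z) + br y (br z x) + br z (br x y) = 0) ∧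
    (∀ x y z : V, Bil (br z x) y + Bil x (br z y) = 0) ∧
    ((∀ x : V, (∀ y : V, Bil x y = 0) → x = 0) ↔ Λ ^ 2 * χB ≠ 0) :=
  extended_ads_carroll_algebra_general D σ hσ Λ χB χ V J Js B P Ps H hJanti hJsanti hindep hspan br
    hbr_anti hJJ hJJs hJB hJP hJPs hBP hPH hPP hPPs hPJs hBB hBH hJH hBJs hHJs hJsJs hJsPs hBPs hHPs
    hPsPs Bil hsymm hBBF hHHF hJJsF hPPsF hJJF hPPF hJBF hJPF hJHF hJPsF hBPF hBHF hBJsF hBPsF hPHF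
    hPJsF hHJsF hHPsF hJsJsF hJsPsF hPsPsF
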